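/- Let b, c, m be nonnegative integers with m + c ≤ b. Define a sequence of integers (β_j)_{0 ≤ j ≤ c} by β_0 = 1, β_1 = −C(b−m−c+1, 1) = −(b−m−c+1), and for 2 ≤ j ≤ c, β_j = −Σ_{l = c−j+1}^{c} C(b−m−c+1, b−m−(j+l−1)) · β_{c−l}. Then β_j = (−1)^j · C(b−m−c+j, j) for all 0 ≤ j ≤ c. -/

import Mathlib

/-!
With `a = b - m - c`, the recursion says `β_j = -∑_{i<j} C(a+1, j-i) β_i` for `1 ≤ j ≤ c`, i.e.
`(1 + X)^(a+1) · ∑ β_j X^j ≡ 1 mod X^(c+1)`. The inverse series is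
`(1 + X)^(-(a+1)) = ∑ C(-(a+1), i) X^i = ∑ (-1)^i C(a+i, i) X^i`, and the coefficient identity
behind this is Chu–Vandermonde for `C(a+1, ·)` and `C(-(a+1), ·)` in the binomial ring `ℤ`.
-/

/-- Binomial coefficient of integers with the convention `iC n k = 0` when `k < 0` or `k > n`. -/
def iC (n k : ℤ) : ℤ := if 0 ≤ k ∧ k ≤ n then (n.toNat.choose k.toNat : ℤ) else 0

open Finset

lemma iC_natCast (n k : ℕ) : iC n k = n.choose k := by
  unfold iC
  split_ifs with h
  · simp
  · rw [Nat.choose_eq_zero_of_lt (by omega), Nat.cast_zero]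

lemma iC_natCast_sub (n k : ℕ) : iC n ((n : ℤ) - k) = n.choose k := by
  rcases le_or_gt k n with hk | hk
  · rw [← Nat.cast_sub hk, iC_natCast, Nat.choose_symm hk]
  · rw [iC, if_neg (by omega), Nat.choose_eq_zero_of_lt hk, Nat.cast_zero]

lemma sum_range_neg_one_pow_mul_choose_mul_choose (a : ℕ) {j : ℕ} (hj : 0 < j) :
    ∑ i ∈ range (j + 1), (-1 : ℤ) ^ i * (a + i).choose i * (a + 1).choose (j - i) = 0 := by
  have h := Ring.add_choose_eq (r := -((a + 1 : ℕ) : ℤ)) (s := ((a + 1 : ℕ) : ℤ)) j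
    (Commute.all _ _)
  rw [neg_add_cancel, Ring.choose_zero_pos ℤ hj, Nat.sum_antidiagonal_eq_sum_range_succ
    (fun p q => Ring.choose (-((a + 1 : ℕ) : ℤ)) p * Ring.choose ((a + 1 : ℕ) : ℤ) q)] at h
  rw [h]
  refine sum_congr rfl fun i _ => ?_
  rw [Ring.choose_neg, Units.smul_def, Int.coe_negOnePow_natCast, smul_eq_mul,
    show ((a + 1 : ℕ) : ℤ) + i - 1 = ((a + i : ℕ) : ℤ) by push_cast; ring, Ring.choose_natCast,
    Ring.choose_natCast]

lemma eq_neg_one_pow_mul_choose_of_recurrence (a c : ℕ) (β : ℕ → ℤ) (h0 : β 0 = 1)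
    (hrec : ∀ j, 1 ≤ j → j ≤ c → β j = -∑ i ∈ range j, ((a + 1).choose (j - i) : ℤ) * β i) :
    ∀ j ≤ c, β j = (-1) ^ j * (a + j).choose j := by
  intro j
  induction j using Nat.strong_induction_on with
  | _ j ih =>
    intro hj
    rcases Nat.eq_zero_or_pos j with rfl | hpos
    · simpa using h0
    have hvandermonde := sum_range_neg_one_pow_mul_choose_mul_choose a hpos
    rw [sum_range_succ, Nat.sub_self, Nat.choose_zero_right] at hvandermonde
    have hβ : ∑ i ∈ range j, ((a + 1).choose (j - i) : ℤ) * β i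
        = ∑ i ∈ range j, (-1 : ℤ) ^ i * (a + i).choose i * (a + 1).choose (j - i) :=
      sum_congr rfl fun i hi => by
        have hij := mem_range.1 hi
        rw [ih i hij (by omega)]
        ring
    rw [hrec j hpos hj, hβ]
    linear_combination -hvandermonde

lemma sum_Icc_reflect {M : Type*} [AddCommMonoid M] (f : ℕ → M) {j c : ℕ} (hjc : j ≤ c) :
    ∑ l ∈ Icc (c - j + 1) c, f (c - l) = ∑ i ∈ range j, f i := by
  rw [← Ico_add_one_right_eq_Icc, sum_Ico_reflect f _ le_rfl, range_eq_Ico]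
  congr 2 <;> omega

/-- **The sequence `β_j` of Lemma 3.7.** Let `b, c, m` be nonnegative integers with
`m + c ≤ b` (i.e. `m ≤ b − c`). If `(β_j)_{0 ≤ j ≤ c}` satisfies `β_0 = 1`,
`β_1 = −C(b−m−c+1, 1) = −(b−m−c+1)`, and for `2 ≤ j ≤ c`,
`β_j = −Σ_{l=c−j+1}^{c} C(b−m−c+1, b−m−(j+l−1)) β_{c−l}`, then
`β_j = (−1)^j C(b−m−c+j, j)` for all `0 ≤ j ≤ c`. -/
theorem stmt_19 (b c m : ℕ) (hmc : m + c ≤ b) (β : ℕ → ℤ)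
    (h0 : β 0 = 1)
    (h1 : 1 ≤ c → β 1 = -((b : ℤ) - m - c + 1))
    (hrec : ∀ j : ℕ, 2 ≤ j → j ≤ c →
      β j = -∑ l ∈ Finset.Icc (c - j + 1) c,
        iC ((b : ℤ) - m - c + 1) ((b : ℤ) - m - ((j : ℤ) + l - 1)) * β (c - l)) :
    ∀ j : ℕ, j ≤ c → β j = (-1 : ℤ) ^ j * iC ((b : ℤ) - m - c + j) (j : ℤ) := by
  set a := b - (m + c)
  have ha : (b : ℤ) - m - c = a := by omega
  have hrec_range : ∀ j, 1 ≤ j → j ≤ c →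
      β j = -∑ i ∈ range j, ((a + 1).choose (j - i) : ℤ) * β i := by
    intro j hj hjc
    obtain rfl | hj2 : j = 1 ∨ 2 ≤ j := by omega
    · simp [h1 hjc, h0, ha]
    rw [hrec j hj2 hjc, ← sum_Icc_reflect _ hjc]
    refine congrArg _ (sum_congr rfl fun l hl => ?_)
    have hl := mem_Icc.1 hl
    rw [show (b : ℤ) - m - c + 1 = ((a + 1 : ℕ) : ℤ) by omega,
      show (b : ℤ) - m - ((j : ℤ) + l - 1) = ((a + 1 : ℕ) : ℤ) - ((j - (c - l) : ℕ) : ℤ) by omega,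
      iC_natCast_sub]
  intro j hj
  rw [eq_neg_one_pow_mul_choose_of_recurrence a c β h0 hrec_range j hj, ha, ← Nat.cast_add, iC_natCast]
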